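/- For every integer n with 0 ≤ n ≤ l−1, let N_{l−1} := {(Δ(c), −c) : c ∈ I^{l−1}} ⊆ (x^{l−1}·B) ⊕ I^n (note I^{l−1} ⊆ I^n). Then the quotient A-module ((x^{l−1}·B) ⊕ I^n)/N_{l−1} is isomorphic to I^n as an A-module. -/

import Mathlib

open MvPolynomial

set_option maxHeartbeats 800000
set_option synthInstance.maxHeartbeats 200000

noncomputable section

/-- `A = ℤ[x,y]/(x^l − y^l)`, with `x = X 0`, `y = X 1`. -/
def IA (l : ℕ) : Ideal (MvPolynomial (Fin 2) ℤ) := Ideal.span {X 0 ^ l - X 1 ^ l}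

/-- `B = ℤ[x,t]/(t^l − 1)`, with `x = X 0`, `t = X 1`. -/
def IB (l : ℕ) : Ideal (MvPolynomial (Fin 2) ℤ) := Ideal.span {X 1 ^ l - 1}

abbrev Aq (l : ℕ) := MvPolynomial (Fin 2) ℤ ⧸ IA l
abbrev Bq (l : ℕ) := MvPolynomial (Fin 2) ℤ ⧸ IB l

/-- The class of `x` in `A`. -/
def xA (l : ℕ) : Aq l := Ideal.Quotient.mk (IA l) (X 0)
/-- The class of `y` in `A`. -/
def yA (l : ℕ) : Aq l := Ideal.Quotient.mk (IA l) (X 1)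
/-- The class of `x` in `B`. -/
def xB (l : ℕ) : Bq l := Ideal.Quotient.mk (IB l) (X 0)
/-- The class of `t` in `B`. -/
def tB (l : ℕ) : Bq l := Ideal.Quotient.mk (IB l) (X 1)

lemma tB_pow (l : ℕ) : tB l ^ l = 1 := by
  have h : (X 1 ^ l - 1 : MvPolynomial (Fin 2) ℤ) ∈ IB l := Ideal.subset_span rfl
  have h2 : Ideal.Quotient.mk (IB l) (X 1 ^ l - 1) = 0 :=
    Ideal.Quotient.eq_zero_iff_mem.mpr h
  have h3 : tB l ^ l - 1 = 0 := by
    rw [tB, ← map_pow, ← map_one (Ideal.Quotient.mk (IB l)), ← map_sub]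
    simpa using h2
  exact sub_eq_zero.mp h3

/-- The diagonal ring homomorphism `Δ : A → B`, determined by `x ↦ x`, `y ↦ t·x`. -/
def Δmap (l : ℕ) : Aq l →+* Bq l :=
  Ideal.Quotient.lift (IA l) ((aeval ![xB l, tB l * xB l]).toRingHom)
    (by
      intro p hp
      obtain ⟨c, rfl⟩ := Ideal.mem_span_singleton'.mp hp
      have key : (aeval ![xB l, tB l * xB l]) (X 0 ^ l - X 1 ^ l : MvPolynomial (Fin 2) ℤ) = 0 := by
        simp [mul_pow, tB_pow l]
      simp only [AlgHom.toRingHom_eq_coe, RingHom.coe_coe, map_mul, key, mul_zero])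

lemma Δmap_xA (l : ℕ) : Δmap l (xA l) = xB l := by
  simp [Δmap, xA]

lemma Δmap_yA (l : ℕ) : Δmap l (yA l) = tB l * xB l := by
  simp [Δmap, yA]

/-- The ideal `I = (x, y) ⊆ A`. -/
def Iid (l : ℕ) : Ideal (Aq l) := Ideal.span {xA l, yA l}

/-- `B` is an `A`-algebra (hence an `A`-module) via `Δ`. -/
instance instAlgAB (l : ℕ) : Algebra (Aq l) (Bq l) := (Δmap l).toAlgebra

/-- The `A`-submodule `x^m·B = {x^m·b : b ∈ B}` of `B`. -/
def xmB (l m : ℕ) : Submodule (Aq l) (Bq l) :=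
  LinearMap.range (LinearMap.mulLeft (Aq l) (xB l ^ m))

instance instACGxmB (l m : ℕ) : AddCommGroup ↥(xmB l m) := Submodule.addCommGroup _

/-- The submodule `N_m = {(Δ(c), −c) : c ∈ I^m}` of `(x^m·B) ⊕ I^a`.  (The displayed set is
already an `A`-submodule, so taking its span does not change it.) -/
def Nsub (l a m : ℕ) : Submodule (Aq l) (↥(xmB l m) × ↥(Iid l ^ a)) :=
  Submodule.span (Aq l)
    {p | ∃ c ∈ Iid l ^ m, (p.1 : Bq l) = Δmap l c ∧ (p.2 : Aq l) = -c}

/-- The `A`-module `τ_{a,m} = ((x^m·B) ⊕ I^a)/N_m` of the paper. -/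
abbrev τmod (l a m : ℕ) := (↥(xmB l m) × ↥(Iid l ^ a)) ⧸ Nsub l a m

/-!
`Δ` is injective: over `ℤ[x]`, `Δ` substitutes `y ↦ x·t`, and a nonzero remainder modulo the monic
`y^l − x^l` has degree `< l`, so after the substitution it cannot be divisible by `t^l − 1`.
Moreover `Δ(I^{l−1}) = x^{l−1}·B`, since `B` is spanned over `A` by the powers of `t`, `t^l = 1`,
and `x^{l−1}·t^j = Δ(x^{l−1−j}·y^j)` for `j < l`. Hence `Δ : I^{l−1} → x^{l−1}·B` is an isomorphism
`e`, and dividing `M ⊕ Q` by `{(e c, −f c)}` for an isomorphism `e` leaves `Q`,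
via `(m, q) ↦ f (e⁻¹ m) + q`.
-/

open Polynomial in
theorem Polynomial.X_pow_sub_C_dvd_of_dvd_comp_C_mul_X {R : Type*} [CommRing R] [IsDomain R]
    {a : R} (ha : a ≠ 0) {l : ℕ} (hl : l ≠ 0) {q : R[X]}
    (h : (X ^ l - 1 : R[X]) ∣ q.comp (C a * X)) : X ^ l - C (a ^ l) ∣ q := by
  set f : R[X] := X ^ l - C (a ^ l)
  have hf : f.Monic := monic_X_pow_sub_C _ hl
  have hf_comp : f.comp (C a * X) = C (a ^ l) * (X ^ l - 1) := by
    simp only [f, sub_comp, pow_comp, X_comp, C_comp, mul_pow, ← C_pow]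
    ring
  have hr : (X ^ l - 1 : R[X]) ∣ (q %ₘ f).comp (C a * X) := by
    rw [← modByMonic_add_div q f, add_comp, mul_comp, hf_comp] at h
    exact (dvd_add_left ((dvd_mul_left _ _).mul_right _)).mp h
  rw [← modByMonic_eq_zero_iff_dvd hf]
  by_contra hne
  have hcomp : (q %ₘ f).comp (C a * X) ≠ 0 := by
    rw [Ne, comp_eq_zero_iff]
    rintro (h0 | ⟨-, h1⟩)
    · exact hne h0
    · exact ha (by simpa using congrArg (coeff · 1) h1)
  have hf_deg : f.natDegree = l := natDegree_X_pow_sub_C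
  have hlt : (q %ₘ f).natDegree < l :=
    hf_deg ▸ natDegree_modByMonic_lt q hf fun h1 => hl (by rw [← hf_deg, h1, natDegree_one])
  have hle := natDegree_le_of_dvd hr hcomp
  rw [natDegree_comp, natDegree_C_mul_X a ha, mul_one, ← C_1, natDegree_X_pow_sub_C] at hle
  omega

def quotRangeProdNegEquiv {R M P Q : Type*} [CommRing R] [AddCommGroup M] [AddCommGroup P]
    [AddCommGroup Q] [Module R M] [Module R P] [Module R Q] (e : P ≃ₗ[R] M) (f : P →ₗ[R] Q) :
    ((M × Q) ⧸ LinearMap.range ((e : P →ₗ[R] M).prod (-f))) ≃ₗ[R] Q :=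
  let Φ : M × Q →ₗ[R] Q := f ∘ₗ (e.symm : M →ₗ[R] P) ∘ₗ LinearMap.fst R M Q + LinearMap.snd R M Q
  have hΦ : Function.Surjective Φ := fun q => ⟨(0, q), by simp [Φ]⟩
  have hker : LinearMap.range ((e : P →ₗ[R] M).prod (-f)) = LinearMap.ker Φ := by
    ext ⟨m, q⟩
    simp only [LinearMap.mem_range, LinearMap.mem_ker, LinearMap.prod_apply, Prod.ext_iff, Φ]
    constructor
    · rintro ⟨c, rfl, rfl⟩
      simp
    · intro h
      exact ⟨e.symm m, e.apply_symm_apply m, neg_eq_of_add_eq_zero_right h⟩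
  (Submodule.quotEquivOfEq _ _ hker).trans (Φ.quotKerEquivOfSurjective hΦ)

-- `x = X 0` becomes a coefficient, `y = X 1` the polynomial variable.
def mvPolyEquiv : MvPolynomial (Fin 2) ℤ ≃ₐ[ℤ] Polynomial (MvPolynomial (Fin 1) ℤ) :=
  (renameEquiv ℤ (Equiv.swap 0 1)).trans (finSuccEquiv ℤ 1)

lemma mvPolyEquiv_X_zero : mvPolyEquiv (X 0) = Polynomial.C (X 0) := by
  rw [mvPolyEquiv, AlgEquiv.trans_apply, renameEquiv_apply, rename_X, Equiv.swap_apply_left]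
  exact finSuccEquiv_X_succ (j := 0)

lemma mvPolyEquiv_X_one : mvPolyEquiv (X 1) = Polynomial.X := by
  rw [mvPolyEquiv, AlgEquiv.trans_apply, renameEquiv_apply, rename_X, Equiv.swap_apply_right]
  exact finSuccEquiv_X_zero

def diagSubst : MvPolynomial (Fin 2) ℤ →ₐ[ℤ] MvPolynomial (Fin 2) ℤ := aeval ![X 0, X 0 * X 1]

lemma mvPolyEquiv_diagSubst (p : MvPolynomial (Fin 2) ℤ) :
    mvPolyEquiv (diagSubst p) = (mvPolyEquiv p).comp (Polynomial.C (X 0) * Polynomial.X) := by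
  have : mvPolyEquiv.toAlgHom.comp diagSubst =
      ((Polynomial.aeval (Polynomial.C (X 0) * Polynomial.X)).restrictScalars ℤ).comp
        mvPolyEquiv.toAlgHom := by
    ext i
    fin_cases i <;> simp [diagSubst, mvPolyEquiv_X_zero, mvPolyEquiv_X_one]
  exact congr($this p)

lemma mem_IA_of_diagSubst_mem {l : ℕ} (hl : l ≠ 0) {p : MvPolynomial (Fin 2) ℤ}
    (h : diagSubst p ∈ IB l) : p ∈ IA l := by
  rw [IB, Ideal.mem_span_singleton, ← map_dvd_iff mvPolyEquiv, mvPolyEquiv_diagSubst, map_sub,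
    map_pow, map_one, mvPolyEquiv_X_one] at h
  rw [IA, Ideal.mem_span_singleton, ← neg_dvd, neg_sub, ← map_dvd_iff mvPolyEquiv, map_sub,
    map_pow, map_pow, mvPolyEquiv_X_zero, mvPolyEquiv_X_one, ← Polynomial.C_pow]
  exact Polynomial.X_pow_sub_C_dvd_of_dvd_comp_C_mul_X (X_ne_zero 0) hl h

lemma Δmap_comp_mk (l : ℕ) :
    (Δmap l).comp (Ideal.Quotient.mk (IA l)) = (Ideal.Quotient.mk (IB l)).comp diagSubst := by
  ext i
  · simp [Δmap, diagSubst]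
  · fin_cases i <;> simp [Δmap, diagSubst, xB, tB, mul_comm]

lemma Δmap_injective {l : ℕ} (hl : l ≠ 0) : Function.Injective (Δmap l) := by
  rw [injective_iff_map_eq_zero]
  intro a ha
  obtain ⟨p, rfl⟩ := Ideal.Quotient.mk_surjective a
  rw [← RingHom.comp_apply, Δmap_comp_mk, RingHom.comp_apply, Ideal.Quotient.eq_zero_iff_mem] at ha
  exact Ideal.Quotient.eq_zero_iff_mem.mpr (mem_IA_of_diagSubst_mem hl ha)

lemma algebraMap_Aq_Bq (l : ℕ) : algebraMap (Aq l) (Bq l) = Δmap l := rfl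

lemma mem_xmB_iff {l m : ℕ} {b : Bq l} : b ∈ xmB l m ↔ b ∈ Ideal.span {xB l ^ m} := by
  simp [xmB, Ideal.mem_span_singleton', mul_comm]

lemma Δmap_mem_xmB {l m : ℕ} {c : Aq l} (hc : c ∈ Iid l ^ m) : Δmap l c ∈ xmB l m := by
  have hI : (Iid l).map (Δmap l) ≤ Ideal.span {xB l} := by
    rw [Iid, Ideal.map_span, Ideal.span_le]
    rintro _ ⟨c, hc | hc, rfl⟩ <;> subst hc
    · simp [Δmap_xA]
    · simp [Δmap_yA, Ideal.mem_span_singleton]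
  rw [mem_xmB_iff, ← Ideal.span_singleton_pow]
  exact Ideal.pow_right_mono hI m (Ideal.map_pow (Δmap l) _ m ▸ Ideal.mem_map_of_mem _ hc)

lemma adjoin_tB_eq_top (l : ℕ) : Algebra.adjoin (Aq l) {tB l} = ⊤ := by
  rw [eq_top_iff]
  rintro b -
  obtain ⟨p, rfl⟩ := Ideal.Quotient.mk_surjective b
  induction p using MvPolynomial.induction_on with
  | C a => simp
  | add p q hp hq => simpa using add_mem hp hq
  | mul_X p i hp =>
    rw [map_mul]
    refine mul_mem hp ?_
    fin_cases i
    · change xB l ∈ _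
      rw [← Δmap_xA, ← algebraMap_Aq_Bq]
      exact Subalgebra.algebraMap_mem _ _
    · exact Algebra.subset_adjoin rfl

lemma Δmap_xA_pow_mul_yA_pow (l i j : ℕ) :
    Δmap l (xA l ^ i * yA l ^ j) = xB l ^ (i + j) * tB l ^ j := by
  rw [map_mul, map_pow, map_pow, Δmap_xA, Δmap_yA]
  ring

lemma exists_mem_pow_Δmap_eq_xB_pow_mul {l : ℕ} (hl : l ≠ 0) (b : Bq l) :
    ∃ c ∈ Iid l ^ (l - 1), Δmap l c = xB l ^ (l - 1) * b := by
  let S : Submodule (Aq l) (Bq l) := Submodule.comap (LinearMap.mulLeft (Aq l) (xB l ^ (l - 1)))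
    (Submodule.map (Algebra.linearMap (Aq l) (Bq l)) (Iid l ^ (l - 1)))
  suffices b ∈ S by simpa [S, algebraMap_Aq_Bq] using this
  have hspan : Submodule.span (Aq l) (Submonoid.closure {tB l} : Set (Bq l)) = ⊤ := by
    rw [← Algebra.adjoin_eq_span, adjoin_tB_eq_top, Algebra.top_toSubmodule]
  refine (hspan ▸ Submodule.span_le.mpr ?_ : ⊤ ≤ S) trivial
  rintro _ hj
  obtain ⟨j, rfl⟩ := Submonoid.mem_closure_singleton.mp hj
  have hj : j % l < l := Nat.mod_lt j (Nat.pos_of_ne_zero hl)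
  refine Submodule.mem_comap.mpr ⟨xA l ^ (l - 1 - j % l) * yA l ^ (j % l), ?_, ?_⟩
  · have hx : xA l ∈ Iid l := Ideal.subset_span (Set.mem_insert _ _)
    have hy : yA l ∈ Iid l := Ideal.subset_span (Set.mem_insert_of_mem _ rfl)
    have := Ideal.mul_mem_mul (Ideal.pow_mem_pow hx (l - 1 - j % l)) (Ideal.pow_mem_pow hy (j % l))
    rwa [← Ideal.IsTwoSided.pow_add, Nat.sub_add_cancel (Nat.le_sub_one_of_lt hj)] at this
  · simp [algebraMap_Aq_Bq, Δmap_xA_pow_mul_yA_pow, Nat.sub_add_cancel (Nat.le_sub_one_of_lt hj),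
      ← pow_eq_pow_mod j (tB_pow l)]

def ΔPow (l m : ℕ) : ↥(Iid l ^ m) →ₗ[Aq l] ↥(xmB l m) :=
  (Algebra.linearMap (Aq l) (Bq l)).restrict fun _ hc => Δmap_mem_xmB hc

lemma ΔPow_bijective {l : ℕ} (hl : l ≠ 0) : Function.Bijective (ΔPow l (l - 1)) := by
  refine ⟨fun c c' h => Subtype.ext (Δmap_injective hl congr(($h : Bq l))), ?_⟩
  rintro ⟨_, b, rfl⟩
  obtain ⟨c, hc, hΔ⟩ := exists_mem_pow_Δmap_eq_xB_pow_mul hl b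
  exact ⟨⟨c, hc⟩, Subtype.ext hΔ⟩

lemma Nsub_eq_range {l a m : ℕ} (h : Iid l ^ m ≤ Iid l ^ a) :
    Nsub l a m = LinearMap.range ((ΔPow l m).prod (-Submodule.inclusion h)) := by
  rw [Nsub, ← Submodule.span_eq (LinearMap.range _)]
  congr 1
  ext ⟨b, c⟩
  simp only [Set.mem_ofPred_eq, SetLike.mem_coe, LinearMap.mem_range, LinearMap.prod_apply,
    Prod.ext_iff, Subtype.ext_iff]
  constructor
  · rintro ⟨c', hc', hb, hc⟩
    exact ⟨⟨c', hc'⟩, hb.symm, by simp [hc]⟩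
  · rintro ⟨c', hb, hc⟩
    exact ⟨c', c'.2, hb.symm, by simp [← hc]⟩

/-- For `0 ≤ n ≤ l−1`, the quotient `A`-module `τ_{n,l−1} = ((x^{l−1}·B) ⊕ I^n)/N_{l−1}` is
isomorphic to `I^n` as an `A`-module. -/
theorem stmt_13 (l : ℕ) (hl : 1 ≤ l) (n : ℕ) (hn : n ≤ l - 1) :
    Nonempty (τmod l n (l - 1) ≃ₗ[Aq l] ↥(Iid l ^ n)) := by
  have h_le : Iid l ^ (l - 1) ≤ Iid l ^ n := Ideal.pow_le_pow_right hn
  let e := LinearEquiv.ofBijective (ΔPow l (l - 1)) (ΔPow_bijective (Nat.one_le_iff_ne_zero.mp hl))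
  exact ⟨(Submodule.quotEquivOfEq _ _ (Nsub_eq_range h_le)).trans
    (quotRangeProdNegEquiv e (Submodule.inclusion h_le))⟩
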